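/- Let f : [0,∞) → [0,∞) be nondecreasing with f(t) → ∞, and suppose f(t) = ln t + b ln ln t + O(1) as t → ∞ for a constant b > 0. Then for an integer k ≥ 0, the integral ∫₀^∞ f(t)^k e^{-f(t)} dt diverges if and only if k ≥ b - 1; consequently the minimal k with divergent integral equals ⌈b⌉ - 1. -/

import Mathlib

/-!
For large `t` the integrand `f t ^ k * exp (-f t)` is within constant factors of
`(log t) ^ (k - b) / t`: indeed `f ~ log`, and `exp (-f t)` differs from
`exp (-(log t + b * log (log t))) = (log t) ^ (-b) / t` by a bounded factor. The substitution
`t = exp u` turns `(log t) ^ p / t` into `u ^ p`, which is integrable at infinity iff `p < -1`.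
Near `0` the integrand is bounded by monotonicity, so only the behaviour at infinity matters.
-/

open MeasureTheory Filter Asymptotics Set Real
open scoped ENNReal

theorem integrableOn_Ioi_log_rpow_div_iff {p T : ℝ} (hT : 1 < T) :
    IntegrableOn (fun t => log t ^ p / t) (Ioi T) ↔ p < -1 := by
  have himage : exp '' Ioi (log T) = Ioi T := by
    rw [image_exp_Ioi, exp_log (by linarith)]
  rw [← himage, integrableOn_image_iff_integrableOn_abs_deriv_smul measurableSet_Ioi
    (fun x _ => (hasDerivAt_exp x).hasDerivWithinAt) exp_injective.injOn]
  simp only [abs_exp, log_exp, smul_eq_mul, mul_div_cancel₀ _ (exp_ne_zero _)]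
  exact integrableOn_Ioi_rpow_iff (log_pos hT)

theorem integrableAtFilter_log_rpow_div_iff {p : ℝ} :
    IntegrableAtFilter (fun t => log t ^ p / t) atTop ↔ p < -1 := by
  refine ⟨fun h => ?_, fun hp =>
    ⟨Ioi 2, Ioi_mem_atTop 2, (integrableOn_Ioi_log_rpow_div_iff one_lt_two).2 hp⟩⟩
  obtain ⟨a, ha⟩ := integrableAtFilter_atTop_iff.1 h
  exact (integrableOn_Ioi_log_rpow_div_iff (lt_max_of_lt_right one_lt_two)).1
    (ha.mono_set (Ioi_subset_Ici (le_max_left a 2)))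

theorem Asymptotics.IsTheta.integrableAtFilter_iff {α E F : Type*} [MeasurableSpace α]
    [NormedAddCommGroup E] [NormedAddCommGroup F] {l : Filter α} [IsMeasurablyGenerated l]
    {μ : Measure α} {f : α → E} {g : α → F} (h : f =Θ[l] g)
    (hf : StronglyMeasurableAtFilter f l μ) (hg : StronglyMeasurableAtFilter g l μ) :
    IntegrableAtFilter f l μ ↔ IntegrableAtFilter g l μ :=
  ⟨h.isBigO_symm.integrableAtFilter hg, h.isBigO.integrableAtFilter hf⟩

theorem integrableOn_Ioi_iff_integrableAtFilter_atTop_of_integrableOn_Ioc {E : Type*}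
    [NormedAddCommGroup E] {g : ℝ → E} {a : ℝ} (hg : ∀ T, IntegrableOn g (Ioc a T)) :
    IntegrableOn g (Ioi a) ↔ IntegrableAtFilter g atTop := by
  refine ⟨fun h => ⟨Ioi a, Ioi_mem_atTop a, h⟩, fun h => ?_⟩
  obtain ⟨T, hT⟩ := integrableAtFilter_atTop_iff.1 h
  exact ((hg T).union hT).mono_set fun t ht => (le_or_gt t T).imp (fun h => ⟨ht, h⟩) le_of_lt

theorem isEquivalent_log_of_sub_log_isBigO {f : ℝ → ℝ} {b : ℝ}
    (hasymp : (fun t => f t - (log t + b * log (log t))) =O[atTop] (fun _ => (1 : ℝ))) :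
    f ~[atTop] log := by
  have hbounded : (fun t => f t - (log t + b * log (log t))) =o[atTop] log :=
    hasymp.trans_isLittleO
      ((isLittleO_one_left_iff ℝ).2 (tendsto_norm_atTop_atTop.comp tendsto_log_atTop))
  have hloglog : (fun t => b * log (log t)) =o[atTop] log :=
    (isLittleO_log_id_atTop.comp_tendsto tendsto_log_atTop).const_mul_left b
  refine IsLittleO.isEquivalent ((hbounded.add hloglog).congr_left fun t => ?_)
  simp only [Pi.sub_apply]
  ring

theorem exp_neg_isTheta_of_sub_log_isBigO {f : ℝ → ℝ} {b : ℝ}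
    (hasymp : (fun t => f t - (log t + b * log (log t))) =O[atTop] (fun _ => (1 : ℝ))) :
    (fun t => exp (-f t)) =Θ[atTop] (fun t => log t ^ (-b) / t) := by
  have hexp : (fun t => exp (-f t)) =Θ[atTop] (fun t => exp (-(log t + b * log (log t)))) := by
    have hdist : (norm ∘ fun t => f t - (log t + b * log (log t))) =
        fun t => |-f t - -(log t + b * log (log t))| := by
      ext t
      rw [Function.comp_apply, norm_eq_abs, ← abs_neg]
      ring_nf
    exact isTheta_exp_comp_exp_comp.2 (hdist ▸ hasymp.isBoundedUnder_le)
  refine hexp.trans_eventuallyEq ?_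
  filter_upwards [eventually_gt_atTop 1] with t ht
  rw [neg_add, exp_add, exp_neg, exp_log (by linarith), rpow_def_of_pos (log_pos ht),
    div_eq_inv_mul]
  ring_nf

theorem pow_mul_exp_neg_isTheta_of_sub_log_isBigO {f : ℝ → ℝ} {b : ℝ} (k : ℕ)
    (hasymp : (fun t => f t - (log t + b * log (log t))) =O[atTop] (fun _ => (1 : ℝ))) :
    (fun t => f t ^ k * exp (-f t)) =Θ[atTop] (fun t => log t ^ ((k : ℝ) - b) / t) := by
  refine (((isEquivalent_log_of_sub_log_isBigO hasymp).isTheta.pow k).mul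
    (exp_neg_isTheta_of_sub_log_isBigO hasymp)).trans_eventuallyEq ?_
  filter_upwards [eventually_gt_atTop 1] with t ht
  rw [sub_eq_add_neg, rpow_add (log_pos ht), rpow_natCast, mul_div_assoc]

theorem integrableOn_Ioc_pow_mul_exp_neg {f : ℝ → ℝ} (hf0 : ∀ t, 0 ≤ t → 0 ≤ f t)
    (hmono : MonotoneOn f (Ici 0)) (k : ℕ) (T : ℝ) :
    IntegrableOn (fun t => f t ^ k * exp (-f t)) (Ioc 0 T) := by
  have hfm : AEMeasurable f (volume.restrict (Ioc 0 T)) :=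
    aemeasurable_restrict_of_monotoneOn measurableSet_Ioc (hmono.mono fun _ ht => ht.1.le)
  refine Integrable.mono' (integrableOn_const (C := f T ^ k) measure_Ioc_lt_top.ne)
    ((hfm.pow_const k).mul (measurable_exp.comp_aemeasurable hfm.neg)).aestronglyMeasurable
    ((ae_restrict_iff' measurableSet_Ioc).2 (ae_of_all _ fun t ht => ?_))
  have hft : 0 ≤ f t := hf0 t ht.1.le
  rw [norm_of_nonneg (by positivity)]
  calc f t ^ k * exp (-f t) ≤ f t ^ k * 1 := by gcongr; simpa using hft
    _ ≤ f T ^ k := by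
      rw [mul_one]
      exact pow_le_pow_left₀ hft (hmono ht.1.le (ht.1.le.trans ht.2) ht.2) k

theorem sInf_setOf_sub_one_le_natCast (b : ℝ) : sInf {k : ℕ | b - 1 ≤ k} = ⌈b⌉₊ - 1 := by
  have hset : {k : ℕ | b - 1 ≤ k} = Ici (⌈b⌉₊ - 1) := by
    ext k
    change b - 1 ≤ (k : ℝ) ↔ ⌈b⌉₊ - 1 ≤ k
    rw [sub_le_iff_le_add, ← Nat.cast_succ, ← Nat.ceil_le]
    omega
  rw [hset, csInf_Ici]

theorem lintegral_pow_mul_exp_neg_eq_top_iff {f : ℝ → ℝ} {b : ℝ}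
    (hf0 : ∀ t, 0 ≤ t → 0 ≤ f t) (hmono : MonotoneOn f (Ici 0))
    (hasymp : (fun t => f t - (log t + b * log (log t))) =O[atTop] (fun _ => (1 : ℝ))) (k : ℕ) :
    ∫⁻ t in Ioi 0, ENNReal.ofReal (f t ^ k * exp (-f t)) = ⊤ ↔ b - 1 ≤ k := by
  have hfm : AEMeasurable f (volume.restrict (Ioi 0)) :=
    aemeasurable_restrict_of_monotoneOn measurableSet_Ioi (hmono.mono Ioi_subset_Ici_self)
  have hgm : AEStronglyMeasurable (fun t => f t ^ k * exp (-f t)) (volume.restrict (Ioi 0)) :=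
    ((hfm.pow_const k).mul (measurable_exp.comp_aemeasurable hfm.neg)).aestronglyMeasurable
  have hg0 : 0 ≤ᵐ[volume.restrict (Ioi 0)] fun t => f t ^ k * exp (-f t) :=
    (ae_restrict_iff' measurableSet_Ioi).2 (ae_of_all _ fun t ht =>
      mul_nonneg (pow_nonneg (hf0 t (le_of_lt ht)) k) (exp_pos _).le)
  have hcomparison := pow_mul_exp_neg_isTheta_of_sub_log_isBigO k hasymp
  rw [← not_iff_not, ← ne_eq, lintegral_ofReal_ne_top_iff_integrable hgm hg0, ← IntegrableOn,
    integrableOn_Ioi_iff_integrableAtFilter_atTop_of_integrableOn_Ioc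
      (integrableOn_Ioc_pow_mul_exp_neg hf0 hmono k),
    hcomparison.integrableAtFilter_iff ⟨Ioi 0, Ioi_mem_atTop 0, hgm⟩
      (by fun_prop : Measurable _).stronglyMeasurable.stronglyMeasurableAtFilter,
    integrableAtFilter_log_rpow_div_iff, not_le]
  constructor <;> intro h <;> linarith

theorem integral_divergence_classification_general (f : ℝ → ℝ)
    (hf0 : ∀ t, 0 ≤ t → 0 ≤ f t) (hmono : MonotoneOn f (Ici 0))
    (b : ℝ)
    (hasymp : (fun t : ℝ => f t - (Real.log t + b * Real.log (Real.log t)))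
      =O[atTop] (fun _ : ℝ => (1 : ℝ))) :
    (∀ k : ℕ,
      (∫⁻ t in Ioi (0:ℝ), ENNReal.ofReal (f t ^ k * Real.exp (-f t)) = ⊤ ↔ b - 1 ≤ (k : ℝ))) ∧
    sInf {k : ℕ | ∫⁻ t in Ioi (0:ℝ), ENNReal.ofReal (f t ^ k * Real.exp (-f t)) = ⊤}
      = ⌈b⌉₊ - 1 := by
  have hdiverges := lintegral_pow_mul_exp_neg_eq_top_iff hf0 hmono hasymp
  refine ⟨hdiverges, ?_⟩
  simp_rw [hdiverges]
  exact sInf_setOf_sub_one_le_natCast b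

/-- If `f : [0,∞) → [0,∞)` is nondecreasing, tends to infinity, and satisfies
`f t = log t + b * log (log t) + O(1)` with `b > 0`, then
`∫₀^∞ f(t)^k e^{-f(t)} dt = ∞` iff `k ≥ b - 1`, and consequently the minimal such
`k` is `⌈b⌉ - 1`. -/
theorem integral_divergence_classification (f : ℝ → ℝ)
    (hf0 : ∀ t, 0 ≤ t → 0 ≤ f t) (hmono : MonotoneOn f (Ici 0))
    (htend : Tendsto f atTop atTop) (b : ℝ) (hb : 0 < b)
    (hasymp : (fun t : ℝ => f t - (Real.log t + b * Real.log (Real.log t)))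
      =O[atTop] (fun _ : ℝ => (1 : ℝ))) :
    (∀ k : ℕ,
      (∫⁻ t in Ioi (0:ℝ), ENNReal.ofReal (f t ^ k * Real.exp (-f t)) = ⊤ ↔ b - 1 ≤ (k : ℝ))) ∧
    sInf {k : ℕ | ∫⁻ t in Ioi (0:ℝ), ENNReal.ofReal (f t ^ k * Real.exp (-f t)) = ⊤}
      = ⌈b⌉₊ - 1 :=
  integral_divergence_classification_general f hf0 hmono b hasymp
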